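/- There exists a constant C, independent of ε and N, such that for every mesh rectangle τ of the Shishkin mesh: ‖u − u^I‖_{L^∞(τ)} ≤ C N^{-2} if τ ⊂ Ω_s, and ‖u − u^I‖_{L^∞(τ)} ≤ C N^{-2} ln² N otherwise. -/

import Mathlib

open MeasureTheory Real Set

noncomputable section

/-- First-order partial derivative in the x-direction. -/
def pdx (f : ℝ × ℝ → ℝ) : ℝ × ℝ → ℝ := fun p => fderiv ℝ f p (1, 0)

/-- First-order partial derivative in the y-direction. -/
def pdy (f : ℝ × ℝ → ℝ) : ℝ × ℝ → ℝ := fun p => fderiv ℝ f p (0, 1)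

/-- Mixed partial derivative `∂_x^i ∂_y^j`. -/
def pd (i j : ℕ) (f : ℝ × ℝ → ℝ) : ℝ × ℝ → ℝ := pdx^[i] (pdy^[j] f)

/-- A function coincides with a bilinear polynomial `a + bx + cy + dxy` on a set. -/
def IsBilinearOn (f : ℝ × ℝ → ℝ) (s : Set (ℝ × ℝ)) : Prop :=
  ∃ a b c d : ℝ, ∀ p ∈ s, f p = a + b * p.1 + c * p.2 + d * (p.1 * p.2)

/-- The Shishkin-mesh node abscissas. -/
def meshX (N : ℕ) (lx : ℝ) (i : ℕ) : ℝ :=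
  if i ≤ N / 2 then 2 * (i : ℝ) * (1 - lx) / (N : ℝ)
  else 1 - 2 * ((N : ℝ) - (i : ℝ)) * lx / (N : ℝ)

/-- The Shishkin-mesh node ordinates. -/
def meshY (N : ℕ) (ly : ℝ) (j : ℕ) : ℝ :=
  if j ≤ N / 3 then 3 * (j : ℝ) * ly / (N : ℝ)
  else if j ≤ 2 * N / 3 then
    (3 * (j : ℝ) / (N : ℝ) - 1) - 3 * (2 * (j : ℝ) - (N : ℝ)) * ly / (N : ℝ)
  else 1 - 3 * ((N : ℝ) - (j : ℝ)) * ly / (N : ℝ)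

/-- The mesh rectangle `τ_{ij} = [x_{i-1}, x_i] × [y_{j-1}, y_j]`. -/
def meshRect (N : ℕ) (lx ly : ℝ) (i j : ℕ) : Set (ℝ × ℝ) :=
  Icc (meshX N lx (i - 1)) (meshX N lx i) ×ˢ Icc (meshY N ly (j - 1)) (meshY N ly j)

def OmegaS (lx ly : ℝ) : Set (ℝ × ℝ) := Icc 0 (1 - lx) ×ˢ Icc ly (1 - ly)
def Omega1R (lx ly : ℝ) : Set (ℝ × ℝ) := Icc (1 - lx) 1 ×ˢ Icc ly (1 - ly)
def Omega2R (lx ly : ℝ) : Set (ℝ × ℝ) := Icc 0 (1 - lx) ×ˢ (Icc 0 ly ∪ Icc (1 - ly) 1)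
def Omega12R (lx ly : ℝ) : Set (ℝ × ℝ) := Icc (1 - lx) 1 ×ˢ (Icc 0 ly ∪ Icc (1 - ly) 1)

/-- Basic assumptions on the Shishkin mesh data (with `ρ = 2.5`). -/
def ShishkinHyp (N : ℕ) (ε β lx ly : ℝ) : Prop :=
  0 < N ∧ 6 ∣ N ∧ 0 < ε ∧ ε ≤ (N : ℝ)⁻¹ ∧ 0 < β ∧
  lx = 2.5 * ε / β * Real.log (N : ℝ) ∧ ly = 2.5 * Real.sqrt ε * Real.log (N : ℝ) ∧
  lx ≤ 1 / 2 ∧ ly ≤ 1 / 4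

/-- `gI` is the piecewise-bilinear nodal interpolant of `g` on the Shishkin mesh. -/
def IsMeshInterpolant (N : ℕ) (lx ly : ℝ) (g gI : ℝ × ℝ → ℝ) : Prop :=
  Continuous gI ∧
  (∀ i j : ℕ, 1 ≤ i → i ≤ N → 1 ≤ j → j ≤ N → IsBilinearOn gI (meshRect N lx ly i j)) ∧
  (∀ i j : ℕ, i ≤ N → j ≤ N →
    gI (meshX N lx i, meshY N ly j) = g (meshX N lx i, meshY N ly j))

def UnitSq : Set (ℝ × ℝ) := Icc 0 1 ×ˢ Icc 0 1

/-- Bounds on the regular part `S` of the solution decomposition. -/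
def BoundS (C0 : ℝ) (S : ℝ × ℝ → ℝ) : Prop :=
  ContDiff ℝ 3 S ∧ ∀ i j : ℕ, i + j ≤ 3 → ∀ p ∈ UnitSq, |pd i j S p| ≤ C0

/-- Bounds on the exponential-layer part `E₁`. -/
def BoundE1 (ε β C0 : ℝ) (E1 : ℝ × ℝ → ℝ) : Prop :=
  ContDiff ℝ 3 E1 ∧ ∀ i j : ℕ, i + j ≤ 3 → ∀ p ∈ UnitSq,
    |pd i j E1 p| ≤ C0 * ε ^ (-(i : ℝ)) * Real.exp (-β * (1 - p.1) / ε)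

/-- Bounds on the characteristic-layer part `E₂`. -/
def BoundE2 (ε C0 : ℝ) (E2 : ℝ × ℝ → ℝ) : Prop :=
  ContDiff ℝ 3 E2 ∧ ∀ i j : ℕ, i + j ≤ 3 → ∀ p ∈ UnitSq,
    |pd i j E2 p| ≤ C0 * ε ^ (-(j : ℝ) / 2) *
      (Real.exp (-p.2 / Real.sqrt ε) + Real.exp (-(1 - p.2) / Real.sqrt ε))

/-- Bounds on the corner-layer part `E₁₂`. -/
def BoundE12 (ε β C0 : ℝ) (E12 : ℝ × ℝ → ℝ) : Prop :=
  ContDiff ℝ 3 E12 ∧ ∀ i j : ℕ, i + j ≤ 3 → ∀ p ∈ UnitSq,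
    |pd i j E12 p| ≤ C0 * ε ^ (-((i : ℝ) + (j : ℝ) / 2)) * Real.exp (-β * (1 - p.1) / ε) *
      (Real.exp (-p.2 / Real.sqrt ε) + Real.exp (-(1 - p.2) / Real.sqrt ε))

/-- Membership in the bilinear finite element space `V^N`. -/
def MemVN (N : ℕ) (lx ly : ℝ) (v : ℝ × ℝ → ℝ) : Prop :=
  Continuous v ∧
  (∀ p ∈ UnitSq, (p.1 = 0 ∨ p.1 = 1 ∨ p.2 = 0 ∨ p.2 = 1) → v p = 0) ∧
  ∀ i j : ℕ, 1 ≤ i → i ≤ N → 1 ≤ j → j ≤ N → IsBilinearOn v (meshRect N lx ly i j)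

/-- The SDFEM stabilization parameter `δ`. -/
def sdDelta (N : ℕ) (lx ly Cstar : ℝ) : ℝ × ℝ → ℝ :=
  (OmegaS lx ly ∪ Omega2R lx ly).indicator fun _ => Cstar / (N : ℝ)

/-- The SDFEM bilinear form `B`. -/
def Bform (N : ℕ) (lx ly ε b c Cstar : ℝ) (v w : ℝ × ℝ → ℝ) : ℝ :=
  ∫ p in UnitSq,
    (ε * (pdx v p * pdx w p + pdy v p * pdy w p)
      + (b * pdx v p + c * v p) * w p
      + (b * pdx v p + c * v p) * (sdDelta N lx ly Cstar p * (b * pdx w p)))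

/-- The square of the SDFEM energy norm `|||·|||`. -/
def energySq (N : ℕ) (lx ly ε b c Cstar : ℝ) (v : ℝ × ℝ → ℝ) : ℝ :=
  ∫ p in UnitSq,
    ((ε + b ^ 2 * sdDelta N lx ly Cstar p) * pdx v p ^ 2
      + ε * pdy v p ^ 2 + c * v p ^ 2)

/-- The neighbourhood `Ω₀` of the point `(xs, ys)`. -/
def OmegaZero (N : ℕ) (xs ys K sx sy : ℝ) : Set (ℝ × ℝ) :=
  {p : ℝ × ℝ | p ∈ Ioo (0 : ℝ) 1 ×ˢ Ioo (0 : ℝ) 1 ∧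
    p.1 - xs ≤ K * sx * Real.log (N : ℝ) ∧ |p.2 - ys| ≤ K * sy * Real.log (N : ℝ)}

/-- `Ω₀'`: the smallest union of mesh rectangles containing `Ω₀`. -/
def OmegaZero' (N : ℕ) (lx ly xs ys K sx sy : ℝ) : Set (ℝ × ℝ) :=
  ⋃ i ∈ Finset.Icc 1 N, ⋃ j ∈ Finset.Icc 1 N,
    ⋃ (_ : volume (OmegaZero N xs ys K sx sy ∩ meshRect N lx ly i j) ≠ 0),
      meshRect N lx ly i j

/-!
On a mesh rectangle the bilinear interpolant is a linear interpolation in `y` followed by one in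
`x`, so for a `C²` function the error is at most `‖∂ₓ²g‖ hₓ² + ‖∂ᵧ²g‖ hᵧ²`, and trivially at most
`2 ‖g‖_∞`. Both bounds are applied to each of the four parts of `u` separately. The smooth part
only sees mesh widths `O(N⁻¹)`. A layer part is either evaluated on a rectangle outside its layer
region, where the choice `λ = 2.5 ⋯ ln N` of the transition points makes its exponential weight at
most `N⁻²`, or on a rectangle of width `O(ε ln N / N)` (resp. `O(√ε ln N / N)`), which compensates
the blow-up `ε⁻²` (resp. `ε⁻¹`) of its second derivatives up to the factor `ln² N`.
-/

def linInterp (a b fa fb x : ℝ) : ℝ := ((b - x) * fa + (x - a) * fb) / (b - a)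

section LinInterp
variable {a b fa fb x M : ℝ}

theorem linInterp_left (hab : a ≠ b) : linInterp a b fa fb a = fa := by
  rw [linInterp, sub_self, zero_mul, add_zero, mul_div_cancel_left₀ _ (sub_ne_zero.2 hab.symm)]

theorem linInterp_right (hab : a ≠ b) : linInterp a b fa fb b = fb := by
  rw [linInterp, sub_self, zero_mul, zero_add, mul_div_cancel_left₀ _ (sub_ne_zero.2 hab.symm)]

theorem hasDerivAt_linInterp (a b fa fb x : ℝ) :
    HasDerivAt (linInterp a b fa fb) ((fb - fa) / (b - a)) x :=
  ((((hasDerivAt_id x).const_sub b).mul_const fa).add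
    (((hasDerivAt_id x).sub_const a).mul_const fb) |>.div_const (b - a)).congr_deriv (by ring)

theorem HasDerivAt.linInterp {F G : ℝ → ℝ} {F' G' t : ℝ} (hF : HasDerivAt F F' t)
    (hG : HasDerivAt G G' t) (a b x : ℝ) :
    HasDerivAt (fun s => _root_.linInterp a b (F s) (G s) x) (_root_.linInterp a b F' G' x) t :=
  ((hF.const_mul (b - x)).add (hG.const_mul (x - a))).div_const (b - a)

theorem abs_linInterp_le (hab : a < b) (hx : x ∈ Icc a b) (ha : |fa| ≤ M) (hb : |fb| ≤ M) :
    |linInterp a b fa fb x| ≤ M := by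
  have hba : 0 < b - a := sub_pos.2 hab
  rw [linInterp, abs_div, abs_of_pos hba, div_le_iff₀ hba]
  calc |(b - x) * fa + (x - a) * fb| ≤ (b - x) * |fa| + (x - a) * |fb| := by
        refine (abs_add_le _ _).trans_eq ?_
        rw [abs_mul, abs_mul, abs_of_nonneg (sub_nonneg.2 hx.2), abs_of_nonneg (sub_nonneg.2 hx.1)]
    _ ≤ (b - x) * M + (x - a) * M := by
        gcongr
        exacts [sub_nonneg.2 hx.2, sub_nonneg.2 hx.1]
    _ = M * (b - a) := by ring

/-- Rolle's theorem gives a zero of `e'`, hence `|e'| ≤ M (b - a)`, and integrating once more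
from `a` gives the bound. -/
theorem abs_le_mul_sq_of_eq_zero_of_eq_zero {e e' e'' : ℝ → ℝ} (hab : a < b)
    (he : ∀ t ∈ Icc a b, HasDerivAt e (e' t) t) (he' : ∀ t ∈ Icc a b, HasDerivAt e' (e'' t) t)
    (hM : ∀ t ∈ Icc a b, |e'' t| ≤ M) (ha : e a = 0) (hb : e b = 0) (hx : x ∈ Icc a b) :
    |e x| ≤ M * (b - a) ^ 2 := by
  obtain ⟨c, hc, he'c⟩ := exists_hasDerivAt_eq_zero hab
    (fun t ht => (he t ht).continuousAt.continuousWithinAt) (ha.trans hb.symm)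
    (fun t ht => he t (Ioo_subset_Icc_self ht))
  have hdist : ∀ s ∈ Icc a b, ∀ t ∈ Icc a b, |t - s| ≤ b - a := fun s hs t ht =>
    abs_sub_le_iff.2 ⟨by linarith [hs.1, ht.2], by linarith [hs.2, ht.1]⟩
  have hM0 : 0 ≤ M := (abs_nonneg _).trans (hM a (left_mem_Icc.2 hab.le))
  have he'_le : ∀ t ∈ Icc a b, |e' t| ≤ M * (b - a) := by
    intro t ht
    have h := (convex_Icc a b).norm_image_sub_le_of_norm_hasDerivWithin_le
      (fun s hs => (he' s hs).hasDerivWithinAt) hM (Ioo_subset_Icc_self hc) ht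
    rw [he'c, sub_zero] at h
    exact h.trans (mul_le_mul_of_nonneg_left (hdist c (Ioo_subset_Icc_self hc) t ht) hM0)
  have h := (convex_Icc a b).norm_image_sub_le_of_norm_hasDerivWithin_le
    (fun s hs => (he s hs).hasDerivWithinAt) he'_le (left_mem_Icc.2 hab.le) hx
  rw [ha, sub_zero] at h
  calc |e x| ≤ M * (b - a) * |x - a| := h
    _ ≤ M * (b - a) * (b - a) := by
        gcongr
        exact hdist a (left_mem_Icc.2 hab.le) x hx
    _ = M * (b - a) ^ 2 := by ring

theorem abs_sub_linInterp_le {f f' f'' : ℝ → ℝ} (hab : a < b)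
    (hf : ∀ t ∈ Icc a b, HasDerivAt f (f' t) t) (hf' : ∀ t ∈ Icc a b, HasDerivAt f' (f'' t) t)
    (hM : ∀ t ∈ Icc a b, |f'' t| ≤ M) (hx : x ∈ Icc a b) :
    |f x - linInterp a b (f a) (f b) x| ≤ M * (b - a) ^ 2 :=
  abs_le_mul_sq_of_eq_zero_of_eq_zero (e := fun t => f t - linInterp a b (f a) (f b) t)
    (e' := fun t => f' t - (f b - f a) / (b - a)) hab
    (fun t ht => (hf t ht).sub (hasDerivAt_linInterp a b (f a) (f b) t))
    (fun t ht => by simpa using (hf' t ht).sub_const ((f b - f a) / (b - a))) hM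
    (by rw [linInterp_left hab.ne, sub_self]) (by rw [linInterp_right hab.ne, sub_self]) hx

end LinInterp

section PartialDeriv
variable {g : ℝ × ℝ → ℝ}

theorem ContDiff.pdx {n : ℕ} (hg : ContDiff ℝ (n + 1) g) : ContDiff ℝ n (pdx g) :=
  (hg.fderiv_right (by exact_mod_cast le_rfl)).clm_apply contDiff_const

theorem ContDiff.pdy {n : ℕ} (hg : ContDiff ℝ (n + 1) g) : ContDiff ℝ n (pdy g) :=
  (hg.fderiv_right (by exact_mod_cast le_rfl)).clm_apply contDiff_const

theorem hasDerivAt_pdx (hg : Differentiable ℝ g) (x y : ℝ) :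
    HasDerivAt (fun t => g (t, y)) (pdx g (x, y)) x := by
  simpa [pdx, Function.comp_def] using
    ((hg (x, y)).hasFDerivAt.comp x ((hasFDerivAt_id x).prodMk (hasFDerivAt_const y x))).hasDerivAt

theorem hasDerivAt_pdy (hg : Differentiable ℝ g) (x y : ℝ) :
    HasDerivAt (fun t => g (x, t)) (pdy g (x, y)) y := by
  simpa [pdy, Function.comp_def] using
    ((hg (x, y)).hasFDerivAt.comp y ((hasFDerivAt_const x y).prodMk (hasFDerivAt_id y))).hasDerivAt

end PartialDeriv

def bilinInterp (g : ℝ × ℝ → ℝ) (x0 x1 y0 y1 : ℝ) (p : ℝ × ℝ) : ℝ :=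
  linInterp x0 x1 (linInterp y0 y1 (g (x0, y0)) (g (x0, y1)) p.2)
    (linInterp y0 y1 (g (x1, y0)) (g (x1, y1)) p.2) p.1

section BilinInterp
variable {g h : ℝ × ℝ → ℝ} {x0 x1 y0 y1 M : ℝ} {p : ℝ × ℝ}

theorem bilinInterp_add (g h : ℝ × ℝ → ℝ) (x0 x1 y0 y1 : ℝ) (p : ℝ × ℝ) :
    bilinInterp (g + h) x0 x1 y0 y1 p
      = bilinInterp g x0 x1 y0 y1 p + bilinInterp h x0 x1 y0 y1 p := by
  simp only [bilinInterp, linInterp, Pi.add_apply]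
  ring

theorem abs_sub_bilinInterp_add_le (g h : ℝ × ℝ → ℝ) (x0 x1 y0 y1 : ℝ) (p : ℝ × ℝ) :
    |(g + h) p - bilinInterp (g + h) x0 x1 y0 y1 p|
      ≤ |g p - bilinInterp g x0 x1 y0 y1 p| + |h p - bilinInterp h x0 x1 y0 y1 p| := by
  rw [bilinInterp_add, Pi.add_apply, add_sub_add_comm]
  exact abs_add_le _ _

theorem IsBilinearOn.eq_bilinInterp (hg : IsBilinearOn g (Icc x0 x1 ×ˢ Icc y0 y1))
    (hx : x0 < x1) (hy : y0 < y1)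
    (h00 : g (x0, y0) = h (x0, y0)) (h01 : g (x0, y1) = h (x0, y1))
    (h10 : g (x1, y0) = h (x1, y0)) (h11 : g (x1, y1) = h (x1, y1))
    (hp : p ∈ Icc x0 x1 ×ˢ Icc y0 y1) :
    g p = bilinInterp h x0 x1 y0 y1 p := by
  obtain ⟨a, b, c, d, hg⟩ := hg
  rw [hg p hp, bilinInterp, ← h00, ← h01, ← h10, ← h11,
    hg _ ⟨left_mem_Icc.2 hx.le, left_mem_Icc.2 hy.le⟩,
    hg _ ⟨left_mem_Icc.2 hx.le, right_mem_Icc.2 hy.le⟩,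
    hg _ ⟨right_mem_Icc.2 hx.le, left_mem_Icc.2 hy.le⟩,
    hg _ ⟨right_mem_Icc.2 hx.le, right_mem_Icc.2 hy.le⟩]
  simp only [linInterp]
  field_simp [sub_ne_zero.2 hx.ne', sub_ne_zero.2 hy.ne']
  ring

theorem abs_bilinInterp_le (hx : x0 < x1) (hy : y0 < y1)
    (hM : ∀ q ∈ Icc x0 x1 ×ˢ Icc y0 y1, |g q| ≤ M) (hp : p ∈ Icc x0 x1 ×ˢ Icc y0 y1) :
    |bilinInterp g x0 x1 y0 y1 p| ≤ M := by
  have hcol : ∀ t ∈ Icc x0 x1, |linInterp y0 y1 (g (t, y0)) (g (t, y1)) p.2| ≤ M := fun t ht =>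
    abs_linInterp_le hy hp.2 (hM _ ⟨ht, left_mem_Icc.2 hy.le⟩) (hM _ ⟨ht, right_mem_Icc.2 hy.le⟩)
  exact abs_linInterp_le hx hp.1 (hcol _ (left_mem_Icc.2 hx.le)) (hcol _ (right_mem_Icc.2 hx.le))

theorem abs_sub_bilinInterp_le_two_mul (hx : x0 < x1) (hy : y0 < y1)
    (hM : ∀ q ∈ Icc x0 x1 ×ˢ Icc y0 y1, |g q| ≤ M) (hp : p ∈ Icc x0 x1 ×ˢ Icc y0 y1) :
    |g p - bilinInterp g x0 x1 y0 y1 p| ≤ 2 * M := by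
  linarith [abs_sub (g p) (bilinInterp g x0 x1 y0 y1 p), hM p hp, abs_bilinInterp_le hx hy hM hp]

theorem abs_sub_bilinInterp_le (hg : ContDiff ℝ 2 g) (hx : x0 < x1) (hy : y0 < y1)
    {Mx My : ℝ} (hMx : ∀ q ∈ Icc x0 x1 ×ˢ Icc y0 y1, |pd 2 0 g q| ≤ Mx)
    (hMy : ∀ q ∈ Icc x0 x1 ×ˢ Icc y0 y1, |pd 0 2 g q| ≤ My) (hp : p ∈ Icc x0 x1 ×ˢ Icc y0 y1) :
    |g p - bilinInterp g x0 x1 y0 y1 p| ≤ Mx * (x1 - x0) ^ 2 + My * (y1 - y0) ^ 2 := by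
  obtain ⟨x, y⟩ := p
  obtain ⟨hpx, hpy⟩ := hp
  have hgd : Differentiable ℝ g := hg.differentiable two_ne_zero
  have hgxd : Differentiable ℝ (pdx g) := (hg.pdx (n := 1)).differentiable one_ne_zero
  have hgyd : Differentiable ℝ (pdy g) := (hg.pdy (n := 1)).differentiable one_ne_zero
  have hy_err : |g (x, y) - linInterp y0 y1 (g (x, y0)) (g (x, y1)) y| ≤ My * (y1 - y0) ^ 2 :=
    abs_sub_linInterp_le hy (fun t _ => hasDerivAt_pdy hgd x t)
      (fun t _ => hasDerivAt_pdy hgyd x t) (fun t ht => hMy _ ⟨hpx, ht⟩) hpy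
  set Φ : ℝ → ℝ := fun t => linInterp y0 y1 (g (t, y0)) (g (t, y1)) y
  have hx_err : |Φ x - linInterp x0 x1 (Φ x0) (Φ x1) x| ≤ Mx * (x1 - x0) ^ 2 :=
    abs_sub_linInterp_le hx
      (fun t _ => (hasDerivAt_pdx hgd t y0).linInterp (hasDerivAt_pdx hgd t y1) y0 y1 y)
      (fun t _ => (hasDerivAt_pdx hgxd t y0).linInterp (hasDerivAt_pdx hgxd t y1) y0 y1 y)
      (fun t ht => abs_linInterp_le hy hpy (hMx _ ⟨ht, left_mem_Icc.2 hy.le⟩)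
        (hMx _ ⟨ht, right_mem_Icc.2 hy.le⟩)) hpx
  calc |g (x, y) - bilinInterp g x0 x1 y0 y1 (x, y)|
      = |(g (x, y) - linInterp y0 y1 (g (x, y0)) (g (x, y1)) y)
          + (Φ x - linInterp x0 x1 (Φ x0) (Φ x1) x)| := by
        rw [bilinInterp, sub_add_sub_cancel]
    _ ≤ _ := (abs_add_le _ _).trans (by linarith)

end BilinInterp

section Mesh
variable {N i j : ℕ} {lx ly : ℝ}

theorem meshX_of_le (hi : i ≤ N / 2) : meshX N lx i = 2 * i * (1 - lx) / N := if_pos hi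

theorem meshX_of_ge (hN : 0 < N) (h2 : 2 ∣ N) (hi : N / 2 ≤ i) :
    meshX N lx i = 1 - 2 * (N - i) * lx / N := by
  by_cases hle : i ≤ N / 2
  · have hi2 : (N : ℝ) = 2 * i := by exact_mod_cast (by omega : N = 2 * i)
    rw [meshX_of_le hle, hi2]
    field_simp [Nat.cast_ne_zero.2 (by omega : i ≠ 0)]
    ring
  · exact if_neg hle

theorem meshX_interval_facts (hN : 0 < N) (h2 : 2 ∣ N) (hlx : 0 < lx) (hlx' : lx ≤ 1 / 2)
    (hi1 : 1 ≤ i) (hiN : i ≤ N) :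
    meshX N lx (i - 1) < meshX N lx i ∧ 0 ≤ meshX N lx (i - 1) ∧ meshX N lx i ≤ 1 ∧
      meshX N lx i - meshX N lx (i - 1) ≤ 3 / N ∧
      (meshX N lx i ≤ 1 - lx ∨ meshX N lx i - meshX N lx (i - 1) = 2 * lx / N) := by
  have hNR : (0 : ℝ) < N := by exact_mod_cast hN
  have hcast : ((i - 1 : ℕ) : ℝ) = i - 1 := by push_cast [hi1]; ring
  rcases le_or_gt i (N / 2) with hi | hi
  · have h2i : 2 * (i : ℝ) ≤ N := by exact_mod_cast (by omega : 2 * i ≤ N)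
    have hi1R : (1 : ℝ) ≤ i := by exact_mod_cast hi1
    rw [meshX_of_le hi, meshX_of_le (by omega), hcast]
    have hw : 2 * i * (1 - lx) / N - 2 * (i - 1) * (1 - lx) / N = 2 * (1 - lx) / N := by
      field_simp
      ring
    refine ⟨by linarith [div_pos (by linarith : 0 < 2 * (1 - lx)) hNR], by
      apply div_nonneg <;> nlinarith, ?_, ?_, Or.inl ?_⟩
    · rw [div_le_iff₀ hNR]; nlinarith
    · rw [hw, div_le_div_iff_of_pos_right hNR]; linarith
    · rw [div_le_iff₀ hNR]; nlinarith
  · have h2i : (N : ℝ) + 2 ≤ 2 * i := by exact_mod_cast (by omega : N + 2 ≤ 2 * i)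
    have hiN' : (i : ℝ) ≤ N := by exact_mod_cast hiN
    rw [meshX_of_ge hN h2 hi.le, meshX_of_ge hN h2 (by omega), hcast]
    have hw : 1 - 2 * (N - i) * lx / N - (1 - 2 * (N - (i - 1)) * lx / N) = 2 * lx / N := by
      field_simp
      ring
    refine ⟨by linarith [div_pos (by linarith : 0 < 2 * lx) hNR], ?_, ?_, ?_, Or.inr hw⟩
    · have : 2 * (N - (i - 1)) * lx / N ≤ 1 / 2 := by rw [div_le_iff₀ hNR]; nlinarith
      linarith
    · have : 0 ≤ 2 * (N - i) * lx / N := by apply div_nonneg <;> nlinarith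
      linarith
    · rw [hw, div_le_div_iff_of_pos_right hNR]; linarith

theorem meshY_of_le (hj : j ≤ N / 3) : meshY N ly j = 3 * j * ly / N := if_pos hj

theorem meshY_of_mem_Icc (hN : 0 < N) (h3 : 3 ∣ N) (hj : N / 3 ≤ j) (hj' : j ≤ 2 * N / 3) :
    meshY N ly j = (3 * j / N - 1) - 3 * (2 * j - N) * ly / N := by
  by_cases hle : j ≤ N / 3
  · have hj3 : (N : ℝ) = 3 * j := by exact_mod_cast (by omega : N = 3 * j)
    rw [meshY_of_le hle, hj3]
    field_simp [Nat.cast_ne_zero.2 (by omega : j ≠ 0)]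
    ring
  · exact (if_neg hle).trans (if_pos hj')

theorem meshY_of_ge (hN : 0 < N) (h3 : 3 ∣ N) (hj : 2 * N / 3 ≤ j) :
    meshY N ly j = 1 - 3 * (N - j) * ly / N := by
  by_cases hle : j ≤ 2 * N / 3
  · have hj3 : 2 * (N : ℝ) = 3 * j := by exact_mod_cast (by omega : 2 * N = 3 * j)
    rw [meshY_of_mem_Icc hN h3 (by omega) hle]
    field_simp
    linear_combination (3 * ly - 1) * hj3
  · exact (if_neg (by omega)).trans (if_neg hle)

theorem meshY_interval_facts (hN : 0 < N) (h3 : 3 ∣ N) (hly : 0 < ly) (hly' : ly ≤ 1 / 4)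
    (hj1 : 1 ≤ j) (hjN : j ≤ N) :
    meshY N ly (j - 1) < meshY N ly j ∧ 0 ≤ meshY N ly (j - 1) ∧ meshY N ly j ≤ 1 ∧
      meshY N ly j - meshY N ly (j - 1) ≤ 3 / N ∧
      ((ly ≤ meshY N ly (j - 1) ∧ meshY N ly j ≤ 1 - ly) ∨
        meshY N ly j - meshY N ly (j - 1) = 3 * ly / N) := by
  have hNR : (0 : ℝ) < N := by exact_mod_cast hN
  have hcast : ((j - 1 : ℕ) : ℝ) = j - 1 := by push_cast [hj1]; ring
  have hjN' : (j : ℝ) ≤ N := by exact_mod_cast hjN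
  have hj1R : (1 : ℝ) ≤ j := by exact_mod_cast hj1
  rcases le_or_gt j (N / 3) with hj | hj
  · have h3j : 3 * (j : ℝ) ≤ N := by exact_mod_cast (by omega : 3 * j ≤ N)
    rw [meshY_of_le hj, meshY_of_le (by omega), hcast]
    have hw : 3 * j * ly / N - 3 * (j - 1) * ly / N = 3 * ly / N := by
      field_simp
      ring
    refine ⟨by linarith [div_pos (by linarith : 0 < 3 * ly) hNR], by
      apply div_nonneg <;> nlinarith, ?_, ?_, Or.inr hw⟩
    · rw [div_le_iff₀ hNR]; nlinarith
    · rw [hw, div_le_div_iff_of_pos_right hNR]; linarith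
  rcases le_or_gt j (2 * N / 3) with hj' | hj'
  · have h3j : (N : ℝ) + 3 ≤ 3 * j := by exact_mod_cast (by omega : N + 3 ≤ 3 * j)
    have h3j' : 3 * (j : ℝ) ≤ 2 * N := by exact_mod_cast (by omega : 3 * j ≤ 2 * N)
    rw [meshY_of_mem_Icc hN h3 hj.le hj', meshY_of_mem_Icc hN h3 (by omega) (by omega), hcast]
    have hw : (3 * j / N - 1) - 3 * (2 * j - N) * ly / N
        - ((3 * (j - 1) / N - 1) - 3 * (2 * (j - 1) - N) * ly / N) = 3 * (1 - 2 * ly) / N := by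
      field_simp
      ring
    have hlow : ly ≤ (3 * (j - 1) / N - 1) - 3 * (2 * (j - 1) - N) * ly / N := by
      rw [← sub_nonneg]
      have e : (3 * (j - 1) / N - 1) - 3 * (2 * (j - 1) - N) * ly / N - ly
          = (3 * (j - 1) - N) * (1 - 2 * ly) / N := by
        field_simp
        ring
      rw [e]
      apply div_nonneg <;> nlinarith
    have hhigh : (3 * j / N - 1) - 3 * (2 * j - N) * ly / N ≤ 1 - ly := by
      rw [← sub_nonneg]
      have e : 1 - ly - ((3 * j / N - 1) - 3 * (2 * j - N) * ly / N)
          = (2 * N - 3 * j) * (1 - 2 * ly) / N := by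
        field_simp
        ring
      rw [e]
      apply div_nonneg <;> nlinarith
    refine ⟨by linarith [div_pos (by linarith : 0 < 3 * (1 - 2 * ly)) hNR], by linarith,
      by linarith, ?_, Or.inl ⟨hlow, hhigh⟩⟩
    rw [hw, div_le_div_iff_of_pos_right hNR]; linarith
  · have h3j : 2 * (N : ℝ) + 3 ≤ 3 * j := by exact_mod_cast (by omega : 2 * N + 3 ≤ 3 * j)
    rw [meshY_of_ge hN h3 hj'.le, meshY_of_ge hN h3 (by omega), hcast]
    have hw : 1 - 3 * (N - j) * ly / N - (1 - 3 * (N - (j - 1)) * ly / N) = 3 * ly / N := by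
      field_simp
      ring
    refine ⟨by linarith [div_pos (by linarith : 0 < 3 * ly) hNR], ?_, ?_, ?_, Or.inr hw⟩
    · have : 3 * (N - (j - 1)) * ly / N ≤ 1 / 4 := by rw [div_le_iff₀ hNR]; nlinarith
      linarith
    · have : 0 ≤ 3 * (N - j) * ly / N := by apply div_nonneg <;> nlinarith
      linarith
    · rw [hw, div_le_div_iff_of_pos_right hNR]; nlinarith

end Mesh

structure ShishkinCell (N : ℕ) (lx ly x0 x1 y0 y1 : ℝ) : Prop where
  x_lt : x0 < x1
  y_lt : y0 < y1
  subset_unitSq : Icc x0 x1 ×ˢ Icc y0 y1 ⊆ UnitSq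
  width_x_le : x1 - x0 ≤ 3 / N
  width_y_le : y1 - y0 ≤ 3 / N
  coarse_or_fine_x : x1 ≤ 1 - lx ∨ x1 - x0 = 2 * lx / N
  coarse_or_fine_y : (ly ≤ y0 ∧ y1 ≤ 1 - ly) ∨ y1 - y0 = 3 * ly / N

namespace ShishkinCell
variable {N : ℕ} {lx ly x0 x1 y0 y1 : ℝ}

theorem sq_width_x_le (hc : ShishkinCell N lx ly x0 x1 y0 y1) : (x1 - x0) ^ 2 ≤ 9 / N ^ 2 := by
  have := pow_le_pow_left₀ (sub_nonneg.2 hc.x_lt.le) hc.width_x_le 2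
  rwa [div_pow, show (3 : ℝ) ^ 2 = 9 by norm_num] at this

theorem sq_width_y_le (hc : ShishkinCell N lx ly x0 x1 y0 y1) : (y1 - y0) ^ 2 ≤ 9 / N ^ 2 := by
  have := pow_le_pow_left₀ (sub_nonneg.2 hc.y_lt.le) hc.width_y_le 2
  rwa [div_pow, show (3 : ℝ) ^ 2 = 9 by norm_num] at this

end ShishkinCell

theorem exp_neg_two_mul_log {x : ℝ} (hx : 0 < x) : exp (-(2 * log x)) = 1 / x ^ 2 := by
  rw [exp_neg, ← Nat.cast_ofNat, ← Real.log_pow, exp_log (by positivity), one_div]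

theorem exp_layer_x_le_one {β ε : ℝ} {q : ℝ × ℝ} (hβ : 0 ≤ β) (hε : 0 ≤ ε) (hq : q ∈ UnitSq) :
    exp (-β * (1 - q.1) / ε) ≤ 1 :=
  exp_le_one_iff.2 <| div_nonpos_of_nonpos_of_nonneg (by nlinarith [hq.1.2]) hε

theorem exp_layer_y_le_two {ε : ℝ} {q : ℝ × ℝ} (hq : q ∈ UnitSq) :
    exp (-q.2 / √ε) + exp (-(1 - q.2) / √ε) ≤ 2 := by
  have h : ∀ t : ℝ, 0 ≤ t → exp (-t / √ε) ≤ 1 := fun t ht =>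
    exp_le_one_iff.2 <| div_nonpos_of_nonpos_of_nonneg (neg_nonpos.2 ht) (sqrt_nonneg ε)
  linarith [h _ hq.2.1, h _ (sub_nonneg.2 hq.2.2)]

namespace ShishkinHyp
variable {N i j : ℕ} {ε β lx ly : ℝ}

theorem one_le_log (h : ShishkinHyp N ε β lx ly) : 1 ≤ log N := by
  obtain ⟨hN, h6, -⟩ := h
  have : (6 : ℝ) ≤ N := by exact_mod_cast Nat.le_of_dvd hN h6
  rw [le_log_iff_exp_le (by linarith)]
  linarith [exp_one_lt_d9]

theorem lx_pos (h : ShishkinHyp N ε β lx ly) : 0 < lx := by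
  have hL := h.one_le_log
  obtain ⟨-, -, hε, -, hβ, hlx, -⟩ := h
  rw [hlx]
  exact mul_pos (by positivity) (by linarith)

theorem ly_pos (h : ShishkinHyp N ε β lx ly) : 0 < ly := by
  have hL := h.one_le_log
  obtain ⟨-, -, hε, -, -, -, hly, -⟩ := h
  rw [hly]
  exact mul_pos (by positivity) (by linarith)

theorem shishkinCell_meshRect (h : ShishkinHyp N ε β lx ly) (hi1 : 1 ≤ i) (hiN : i ≤ N)
    (hj1 : 1 ≤ j) (hjN : j ≤ N) :
    ShishkinCell N lx ly (meshX N lx (i - 1)) (meshX N lx i)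
      (meshY N ly (j - 1)) (meshY N ly j) := by
  have hlx0 := h.lx_pos
  have hly0 := h.ly_pos
  obtain ⟨hN, h6, -, -, -, -, -, hlx, hly⟩ := h
  obtain ⟨x_lt, zero_le_x, x_le_one, width_x_le, coarse_or_fine_x⟩ :=
    meshX_interval_facts hN (dvd_trans (by norm_num) h6) hlx0 hlx hi1 hiN
  obtain ⟨y_lt, zero_le_y, y_le_one, width_y_le, coarse_or_fine_y⟩ :=
    meshY_interval_facts hN (dvd_trans (by norm_num) h6) hly0 hly hj1 hjN
  refine ⟨x_lt, y_lt, ?_, width_x_le, width_y_le, coarse_or_fine_x, coarse_or_fine_y⟩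
  rintro q ⟨⟨hq1, hq2⟩, hq3, hq4⟩
  exact ⟨⟨by linarith, by linarith⟩, by linarith, by linarith⟩

theorem exp_layer_x_le (h : ShishkinHyp N ε β lx ly) {t : ℝ} (ht : t ≤ 1 - lx) :
    exp (-β * (1 - t) / ε) ≤ 1 / N ^ 2 := by
  have hL := h.one_le_log
  obtain ⟨hN, -, hε, -, hβ, hlx, -⟩ := h
  have hβlx : β * lx = 2.5 * ε * log N := by rw [hlx]; field_simp
  calc exp (-β * (1 - t) / ε) ≤ exp (-(2 * log N)) := by
        rw [exp_le_exp, neg_mul, neg_div, neg_le_neg_iff, le_div_iff₀ hε]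
        nlinarith
    _ = 1 / N ^ 2 := exp_neg_two_mul_log (by exact_mod_cast hN)

theorem exp_layer_y_le (h : ShishkinHyp N ε β lx ly) {t : ℝ} (ht : ly ≤ t) (ht' : t ≤ 1 - ly) :
    exp (-t / √ε) + exp (-(1 - t) / √ε) ≤ 2 / N ^ 2 := by
  have hL := h.one_le_log
  obtain ⟨hN, -, hε, -, -, -, hly, -⟩ := h
  have hsε : 0 < √ε := sqrt_pos.2 hε
  have hdecay : ∀ s, ly ≤ s → exp (-s / √ε) ≤ 1 / N ^ 2 := fun s hs =>
    calc exp (-s / √ε) ≤ exp (-(2 * log N)) := by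
          rw [exp_le_exp, neg_div, neg_le_neg_iff, le_div_iff₀ hsε]
          nlinarith
      _ = 1 / N ^ 2 := exp_neg_two_mul_log (by exact_mod_cast hN)
  calc exp (-t / √ε) + exp (-(1 - t) / √ε) ≤ 1 / N ^ 2 + 1 / N ^ 2 :=
        add_le_add (hdecay t ht) (hdecay (1 - t) (by linarith))
    _ = 2 / N ^ 2 := by ring

theorem sq_fine_width_x (h : ShishkinHyp N ε β lx ly) :
    (2 * lx / N) ^ 2 = 25 * ε ^ 2 * log N ^ 2 / (β ^ 2 * N ^ 2) := by
  obtain ⟨-, -, -, -, hβ, hlx, -⟩ := h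
  rw [hlx]
  field_simp
  norm_num
  ring

theorem sq_fine_width_y (h : ShishkinHyp N ε β lx ly) :
    (3 * ly / N) ^ 2 = 225 / 4 * ε * log N ^ 2 / N ^ 2 := by
  obtain ⟨-, -, hε, -, -, -, hly, -⟩ := h
  rw [hly, div_pow, mul_pow, mul_pow, mul_pow, sq_sqrt hε.le]
  norm_num
  ring

theorem one_le_log_sq (h : ShishkinHyp N ε β lx ly) : 1 ≤ log N ^ 2 := by
  nlinarith [h.one_le_log]

end ShishkinHyp

section Components
variable {N : ℕ} {ε β lx ly C0 x0 x1 y0 y1 : ℝ} {p : ℝ × ℝ}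

theorem BoundS.interp_error_le {S : ℝ × ℝ → ℝ} (hS : BoundS C0 S)
    (hc : ShishkinCell N lx ly x0 x1 y0 y1) (hp : p ∈ Icc x0 x1 ×ˢ Icc y0 y1) :
    |S p - bilinInterp S x0 x1 y0 y1 p| ≤ 18 * C0 / N ^ 2 := by
  have hC0 : 0 ≤ C0 := (abs_nonneg _).trans (hS.2 0 0 (by norm_num) p (hc.subset_unitSq hp))
  calc |S p - bilinInterp S x0 x1 y0 y1 p| ≤ C0 * (x1 - x0) ^ 2 + C0 * (y1 - y0) ^ 2 :=
        abs_sub_bilinInterp_le (hS.1.of_le (by norm_num)) hc.x_lt hc.y_lt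
          (fun q hq => hS.2 2 0 (by norm_num) q (hc.subset_unitSq hq))
          (fun q hq => hS.2 0 2 (by norm_num) q (hc.subset_unitSq hq)) hp
    _ ≤ C0 * (9 / N ^ 2) + C0 * (9 / N ^ 2) := by
        gcongr
        exacts [hc.sq_width_x_le, hc.sq_width_y_le]
    _ = 18 * C0 / N ^ 2 := by ring

theorem BoundE1.interp_error_le_of_coarse {E1 : ℝ × ℝ → ℝ} (hC0 : 0 ≤ C0)
    (hSh : ShishkinHyp N ε β lx ly) (hE1 : BoundE1 ε β C0 E1)
    (hc : ShishkinCell N lx ly x0 x1 y0 y1) (hx1 : x1 ≤ 1 - lx) (hp : p ∈ Icc x0 x1 ×ˢ Icc y0 y1) :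
    |E1 p - bilinInterp E1 x0 x1 y0 y1 p| ≤ 2 * C0 / N ^ 2 := by
  have hsup : ∀ q ∈ Icc x0 x1 ×ˢ Icc y0 y1, |E1 q| ≤ C0 / N ^ 2 := by
    intro q hq
    have hb := hE1.2 0 0 (by norm_num) q (hc.subset_unitSq hq)
    rw [Nat.cast_zero, neg_zero, rpow_zero, mul_one] at hb
    calc |E1 q| ≤ C0 * exp (-β * (1 - q.1) / ε) := hb
      _ ≤ C0 * (1 / N ^ 2) := by gcongr; exact hSh.exp_layer_x_le (hq.1.2.trans hx1)
      _ = C0 / N ^ 2 := mul_one_div _ _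
  exact (abs_sub_bilinInterp_le_two_mul hc.x_lt hc.y_lt hsup hp).trans_eq (mul_div_assoc' _ _ _)

theorem BoundE1.interp_error_le {E1 : ℝ × ℝ → ℝ} (hC0 : 0 ≤ C0)
    (hSh : ShishkinHyp N ε β lx ly) (hE1 : BoundE1 ε β C0 E1)
    (hc : ShishkinCell N lx ly x0 x1 y0 y1) (hp : p ∈ Icc x0 x1 ×ˢ Icc y0 y1) :
    |E1 p - bilinInterp E1 x0 x1 y0 y1 p| ≤ (25 / β ^ 2 + 9) * C0 * log N ^ 2 / N ^ 2 := by
  have hL : C0 ≤ C0 * log N ^ 2 := le_mul_of_one_le_right hC0 hSh.one_le_log_sq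
  have hβC : 0 ≤ 25 / β ^ 2 * (C0 * log N ^ 2) := by positivity
  rcases hc.coarse_or_fine_x with hx1 | hwx
  · refine (hE1.interp_error_le_of_coarse hC0 hSh hc hx1 hp).trans ?_
    gcongr ?_ / _
    linarith
  have hwidth := hSh.sq_fine_width_x
  obtain ⟨-, -, hε, -, hβ, -⟩ := hSh
  have hxx : ∀ q ∈ Icc x0 x1 ×ˢ Icc y0 y1, |pd 2 0 E1 q| ≤ C0 / ε ^ 2 := by
    intro q hq
    have hb := hE1.2 2 0 (by norm_num) q (hc.subset_unitSq hq)
    rw [rpow_neg hε.le, Nat.cast_ofNat, rpow_two] at hb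
    calc |pd 2 0 E1 q| ≤ C0 * (ε ^ 2)⁻¹ * exp (-β * (1 - q.1) / ε) := hb
      _ ≤ C0 * (ε ^ 2)⁻¹ * 1 := by
          gcongr; exact exp_layer_x_le_one hβ.le hε.le (hc.subset_unitSq hq)
      _ = C0 / ε ^ 2 := by ring
  have hyy : ∀ q ∈ Icc x0 x1 ×ˢ Icc y0 y1, |pd 0 2 E1 q| ≤ C0 := by
    intro q hq
    have hb := hE1.2 0 2 (by norm_num) q (hc.subset_unitSq hq)
    rw [Nat.cast_zero, neg_zero, rpow_zero, mul_one] at hb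
    exact hb.trans <|
      mul_le_of_le_one_right hC0 (exp_layer_x_le_one hβ.le hε.le (hc.subset_unitSq hq))
  calc |E1 p - bilinInterp E1 x0 x1 y0 y1 p| ≤ C0 / ε ^ 2 * (x1 - x0) ^ 2 + C0 * (y1 - y0) ^ 2 :=
        abs_sub_bilinInterp_le (hE1.1.of_le (by norm_num)) hc.x_lt hc.y_lt hxx hyy hp
    _ ≤ C0 / ε ^ 2 * (25 * ε ^ 2 * log N ^ 2 / (β ^ 2 * N ^ 2)) + C0 * (9 / N ^ 2) := by
        rw [hwx, hwidth]
        gcongr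
        exact hc.sq_width_y_le
    _ = (25 / β ^ 2 * (C0 * log N ^ 2) + 9 * C0) / N ^ 2 := by
        field_simp
    _ ≤ _ := by
        gcongr ?_ / _
        linarith

theorem BoundE2.interp_error_le_of_coarse {E2 : ℝ × ℝ → ℝ} (hC0 : 0 ≤ C0)
    (hSh : ShishkinHyp N ε β lx ly) (hE2 : BoundE2 ε C0 E2)
    (hc : ShishkinCell N lx ly x0 x1 y0 y1) (hy : ly ≤ y0 ∧ y1 ≤ 1 - ly)
    (hp : p ∈ Icc x0 x1 ×ˢ Icc y0 y1) :
    |E2 p - bilinInterp E2 x0 x1 y0 y1 p| ≤ 4 * C0 / N ^ 2 := by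
  have hsup : ∀ q ∈ Icc x0 x1 ×ˢ Icc y0 y1, |E2 q| ≤ 2 * C0 / N ^ 2 := by
    intro q hq
    have hb := hE2.2 0 0 (by norm_num) q (hc.subset_unitSq hq)
    rw [Nat.cast_zero, neg_zero, zero_div, rpow_zero, mul_one] at hb
    calc |E2 q| ≤ C0 * (exp (-q.2 / √ε) + exp (-(1 - q.2) / √ε)) := hb
      _ ≤ C0 * (2 / N ^ 2) := by
          gcongr
          exact hSh.exp_layer_y_le (hy.1.trans hq.2.1) (hq.2.2.trans hy.2)
      _ = 2 * C0 / N ^ 2 := by ring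
  calc |E2 p - bilinInterp E2 x0 x1 y0 y1 p| ≤ 2 * (2 * C0 / N ^ 2) :=
        abs_sub_bilinInterp_le_two_mul hc.x_lt hc.y_lt hsup hp
    _ = 4 * C0 / N ^ 2 := by ring

theorem BoundE2.interp_error_le {E2 : ℝ × ℝ → ℝ} (hC0 : 0 ≤ C0)
    (hSh : ShishkinHyp N ε β lx ly) (hE2 : BoundE2 ε C0 E2)
    (hc : ShishkinCell N lx ly x0 x1 y0 y1) (hp : p ∈ Icc x0 x1 ×ˢ Icc y0 y1) :
    |E2 p - bilinInterp E2 x0 x1 y0 y1 p| ≤ 131 * C0 * log N ^ 2 / N ^ 2 := by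
  have hL : C0 ≤ C0 * log N ^ 2 := le_mul_of_one_le_right hC0 hSh.one_le_log_sq
  rcases hc.coarse_or_fine_y with hy | hwy
  · refine (hE2.interp_error_le_of_coarse hC0 hSh hc hy hp).trans ?_
    gcongr ?_ / _
    linarith
  have hwidth := hSh.sq_fine_width_y
  obtain ⟨-, -, hε, -⟩ := hSh
  have hxx : ∀ q ∈ Icc x0 x1 ×ˢ Icc y0 y1, |pd 2 0 E2 q| ≤ 2 * C0 := by
    intro q hq
    have hb := hE2.2 2 0 (by norm_num) q (hc.subset_unitSq hq)
    rw [Nat.cast_zero, neg_zero, zero_div, rpow_zero, mul_one] at hb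
    calc |pd 2 0 E2 q| ≤ C0 * (exp (-q.2 / √ε) + exp (-(1 - q.2) / √ε)) := hb
      _ ≤ C0 * 2 := by gcongr; exact exp_layer_y_le_two (hc.subset_unitSq hq)
      _ = 2 * C0 := mul_comm _ _
  have hyy : ∀ q ∈ Icc x0 x1 ×ˢ Icc y0 y1, |pd 0 2 E2 q| ≤ 2 * C0 / ε := by
    intro q hq
    have hb := hE2.2 0 2 (by norm_num) q (hc.subset_unitSq hq)
    rw [show ε ^ (-((2 : ℕ) : ℝ) / 2) = ε⁻¹ by norm_num [rpow_neg_one]] at hb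
    calc |pd 0 2 E2 q| ≤ C0 * ε⁻¹ * (exp (-q.2 / √ε) + exp (-(1 - q.2) / √ε)) := hb
      _ ≤ C0 * ε⁻¹ * 2 := by gcongr; exact exp_layer_y_le_two (hc.subset_unitSq hq)
      _ = 2 * C0 / ε := by ring
  calc |E2 p - bilinInterp E2 x0 x1 y0 y1 p|
      ≤ 2 * C0 * (x1 - x0) ^ 2 + 2 * C0 / ε * (y1 - y0) ^ 2 :=
        abs_sub_bilinInterp_le (hE2.1.of_le (by norm_num)) hc.x_lt hc.y_lt hxx hyy hp
    _ ≤ 2 * C0 * (9 / N ^ 2) + 2 * C0 / ε * (225 / 4 * ε * log N ^ 2 / N ^ 2) := by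
        rw [hwy, hwidth]
        gcongr
        exact hc.sq_width_x_le
    _ = (18 * C0 + 225 / 2 * (C0 * log N ^ 2)) / N ^ 2 := by
        field_simp
        ring
    _ ≤ _ := by
        gcongr ?_ / _
        linarith

theorem BoundE12.interp_error_le_of_coarse_x {E12 : ℝ × ℝ → ℝ} (hC0 : 0 ≤ C0)
    (hSh : ShishkinHyp N ε β lx ly) (hE12 : BoundE12 ε β C0 E12)
    (hc : ShishkinCell N lx ly x0 x1 y0 y1) (hx1 : x1 ≤ 1 - lx)
    (hp : p ∈ Icc x0 x1 ×ˢ Icc y0 y1) :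
    |E12 p - bilinInterp E12 x0 x1 y0 y1 p| ≤ 4 * C0 / N ^ 2 := by
  have hsup : ∀ q ∈ Icc x0 x1 ×ˢ Icc y0 y1, |E12 q| ≤ 2 * C0 / N ^ 2 := by
    intro q hq
    have hb := hE12.2 0 0 (by norm_num) q (hc.subset_unitSq hq)
    rw [Nat.cast_zero, zero_div, add_zero, neg_zero, rpow_zero, mul_one] at hb
    calc |E12 q| ≤ C0 * exp (-β * (1 - q.1) / ε)
          * (exp (-q.2 / √ε) + exp (-(1 - q.2) / √ε)) := hb
      _ ≤ C0 * (1 / N ^ 2) * 2 := by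
          gcongr
          exacts [hSh.exp_layer_x_le (hq.1.2.trans hx1), exp_layer_y_le_two (hc.subset_unitSq hq)]
      _ = 2 * C0 / N ^ 2 := by ring
  calc |E12 p - bilinInterp E12 x0 x1 y0 y1 p| ≤ 2 * (2 * C0 / N ^ 2) :=
        abs_sub_bilinInterp_le_two_mul hc.x_lt hc.y_lt hsup hp
    _ = 4 * C0 / N ^ 2 := by ring

theorem BoundE12.interp_error_le_of_coarse_y {E12 : ℝ × ℝ → ℝ} (hC0 : 0 ≤ C0)
    (hSh : ShishkinHyp N ε β lx ly) (hE12 : BoundE12 ε β C0 E12)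
    (hc : ShishkinCell N lx ly x0 x1 y0 y1) (hy : ly ≤ y0 ∧ y1 ≤ 1 - ly)
    (hp : p ∈ Icc x0 x1 ×ˢ Icc y0 y1) :
    |E12 p - bilinInterp E12 x0 x1 y0 y1 p| ≤ 4 * C0 / N ^ 2 := by
  have hy_decay := fun q (hq : q ∈ Icc x0 x1 ×ˢ Icc y0 y1) =>
    hSh.exp_layer_y_le (hy.1.trans hq.2.1) (hq.2.2.trans hy.2)
  obtain ⟨-, -, hε, -, hβ, -⟩ := hSh
  have hsup : ∀ q ∈ Icc x0 x1 ×ˢ Icc y0 y1, |E12 q| ≤ 2 * C0 / N ^ 2 := by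
    intro q hq
    have hb := hE12.2 0 0 (by norm_num) q (hc.subset_unitSq hq)
    rw [Nat.cast_zero, zero_div, add_zero, neg_zero, rpow_zero, mul_one] at hb
    calc |E12 q| ≤ C0 * exp (-β * (1 - q.1) / ε)
          * (exp (-q.2 / √ε) + exp (-(1 - q.2) / √ε)) := hb
      _ ≤ C0 * 1 * (2 / N ^ 2) := by
          gcongr
          exacts [exp_layer_x_le_one hβ.le hε.le (hc.subset_unitSq hq), hy_decay q hq]
      _ = 2 * C0 / N ^ 2 := by ring
  calc |E12 p - bilinInterp E12 x0 x1 y0 y1 p| ≤ 2 * (2 * C0 / N ^ 2) :=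
        abs_sub_bilinInterp_le_two_mul hc.x_lt hc.y_lt hsup hp
    _ = 4 * C0 / N ^ 2 := by ring

theorem BoundE12.interp_error_le {E12 : ℝ × ℝ → ℝ} (hC0 : 0 ≤ C0)
    (hSh : ShishkinHyp N ε β lx ly) (hE12 : BoundE12 ε β C0 E12)
    (hc : ShishkinCell N lx ly x0 x1 y0 y1) (hp : p ∈ Icc x0 x1 ×ˢ Icc y0 y1) :
    |E12 p - bilinInterp E12 x0 x1 y0 y1 p| ≤ (50 / β ^ 2 + 113) * C0 * log N ^ 2 / N ^ 2 := by
  have hL : C0 ≤ C0 * log N ^ 2 := le_mul_of_one_le_right hC0 hSh.one_le_log_sq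
  have hβC : 0 ≤ 50 / β ^ 2 * (C0 * log N ^ 2) := by positivity
  rcases hc.coarse_or_fine_x with hx1 | hwx
  · refine (hE12.interp_error_le_of_coarse_x hC0 hSh hc hx1 hp).trans ?_
    gcongr ?_ / _
    linarith
  rcases hc.coarse_or_fine_y with hy | hwy
  · refine (hE12.interp_error_le_of_coarse_y hC0 hSh hc hy hp).trans ?_
    gcongr ?_ / _
    linarith
  have hwidth_x := hSh.sq_fine_width_x
  have hwidth_y := hSh.sq_fine_width_y
  obtain ⟨-, -, hε, -, hβ, -⟩ := hSh
  have hxx : ∀ q ∈ Icc x0 x1 ×ˢ Icc y0 y1, |pd 2 0 E12 q| ≤ 2 * C0 / ε ^ 2 := by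
    intro q hq
    have hb := hE12.2 2 0 (by norm_num) q (hc.subset_unitSq hq)
    rw [show ε ^ (-(((2 : ℕ) : ℝ) + ((0 : ℕ) : ℝ) / 2)) = (ε ^ 2)⁻¹ by
      norm_num [rpow_neg hε.le]] at hb
    calc |pd 2 0 E12 q| ≤ C0 * (ε ^ 2)⁻¹ * exp (-β * (1 - q.1) / ε)
          * (exp (-q.2 / √ε) + exp (-(1 - q.2) / √ε)) := hb
      _ ≤ C0 * (ε ^ 2)⁻¹ * 1 * 2 := by
          gcongr
          exacts [exp_layer_x_le_one hβ.le hε.le (hc.subset_unitSq hq),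
            exp_layer_y_le_two (hc.subset_unitSq hq)]
      _ = 2 * C0 / ε ^ 2 := by ring
  have hyy : ∀ q ∈ Icc x0 x1 ×ˢ Icc y0 y1, |pd 0 2 E12 q| ≤ 2 * C0 / ε := by
    intro q hq
    have hb := hE12.2 0 2 (by norm_num) q (hc.subset_unitSq hq)
    rw [show ε ^ (-(((0 : ℕ) : ℝ) + ((2 : ℕ) : ℝ) / 2)) = ε⁻¹ by
      norm_num [rpow_neg_one]] at hb
    calc |pd 0 2 E12 q| ≤ C0 * ε⁻¹ * exp (-β * (1 - q.1) / ε)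
          * (exp (-q.2 / √ε) + exp (-(1 - q.2) / √ε)) := hb
      _ ≤ C0 * ε⁻¹ * 1 * 2 := by
          gcongr
          exacts [exp_layer_x_le_one hβ.le hε.le (hc.subset_unitSq hq),
            exp_layer_y_le_two (hc.subset_unitSq hq)]
      _ = 2 * C0 / ε := by ring
  calc |E12 p - bilinInterp E12 x0 x1 y0 y1 p|
      ≤ 2 * C0 / ε ^ 2 * (x1 - x0) ^ 2 + 2 * C0 / ε * (y1 - y0) ^ 2 :=
        abs_sub_bilinInterp_le (hE12.1.of_le (by norm_num)) hc.x_lt hc.y_lt hxx hyy hp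
    _ = 2 * C0 / ε ^ 2 * (25 * ε ^ 2 * log N ^ 2 / (β ^ 2 * N ^ 2))
          + 2 * C0 / ε * (225 / 4 * ε * log N ^ 2 / N ^ 2) := by
        rw [hwx, hwy, hwidth_x, hwidth_y]
    _ = (50 / β ^ 2 * (C0 * log N ^ 2) + 225 / 2 * (C0 * log N ^ 2)) / N ^ 2 := by
        field_simp
        ring
    _ ≤ _ := by
        gcongr ?_ / _
        linarith

end Components

theorem IsMeshInterpolant.eq_bilinInterp {N i j : ℕ} {lx ly : ℝ} {g gI : ℝ × ℝ → ℝ}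
    (hI : IsMeshInterpolant N lx ly g gI) (hi1 : 1 ≤ i) (hiN : i ≤ N) (hj1 : 1 ≤ j) (hjN : j ≤ N)
    (hx : meshX N lx (i - 1) < meshX N lx i) (hy : meshY N ly (j - 1) < meshY N ly j)
    {p : ℝ × ℝ} (hp : p ∈ meshRect N lx ly i j) :
    gI p = bilinInterp g (meshX N lx (i - 1)) (meshX N lx i)
      (meshY N ly (j - 1)) (meshY N ly j) p :=
  (hI.2.1 i j hi1 hiN hj1 hjN).eq_bilinInterp hx hy (hI.2.2 _ _ (by omega) (by omega))
    (hI.2.2 _ _ (by omega) hjN) (hI.2.2 _ _ hiN (by omega)) (hI.2.2 _ _ hiN hjN) hp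

theorem abs_sub_le_sum_of_eq_bilinInterp {S E1 E2 E12 u uI : ℝ × ℝ → ℝ} {x0 x1 y0 y1 : ℝ}
    {p : ℝ × ℝ} (hu : ∀ q, u q = S q + E1 q + E2 q + E12 q)
    (huI : uI p = bilinInterp u x0 x1 y0 y1 p) :
    |u p - uI p| ≤ |S p - bilinInterp S x0 x1 y0 y1 p| + |E1 p - bilinInterp E1 x0 x1 y0 y1 p|
      + |E2 p - bilinInterp E2 x0 x1 y0 y1 p| + |E12 p - bilinInterp E12 x0 x1 y0 y1 p| := by
  rw [huI, show u = S + E1 + E2 + E12 from funext hu]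
  refine (abs_sub_bilinInterp_add_le _ _ _ _ _ _ _).trans (add_le_add ?_ le_rfl)
  refine (abs_sub_bilinInterp_add_le _ _ _ _ _ _ _).trans (add_le_add ?_ le_rfl)
  exact abs_sub_bilinInterp_add_le _ _ _ _ _ _ _

theorem bounds_of_Icc_prod_Icc_subset_omegaS {lx ly x0 x1 y0 y1 : ℝ}
    (h : Icc x0 x1 ×ˢ Icc y0 y1 ⊆ OmegaS lx ly) (hx : x0 ≤ x1) (hy : y0 ≤ y1) :
    x1 ≤ 1 - lx ∧ ly ≤ y0 ∧ y1 ≤ 1 - ly :=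
  have h00 := h (mk_mem_prod (left_mem_Icc.2 hx) (left_mem_Icc.2 hy))
  have h11 := h (mk_mem_prod (right_mem_Icc.2 hx) (right_mem_Icc.2 hy))
  ⟨h11.1.2, h00.2.1, h11.2.2⟩

theorem interpolation_error_Linf_general (β C0 : ℝ) (hC0 : 0 < C0) :
    ∃ C : ℝ, 0 < C ∧
      ∀ (N : ℕ) (ε lx ly : ℝ) (S E1 E2 E12 u uI : ℝ × ℝ → ℝ),
        ShishkinHyp N ε β lx ly →
        BoundS C0 S → BoundE1 ε β C0 E1 → BoundE2 ε C0 E2 → BoundE12 ε β C0 E12 →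
        (∀ p : ℝ × ℝ, u p = S p + E1 p + E2 p + E12 p) →
        IsMeshInterpolant N lx ly u uI →
        ∀ i j : ℕ, 1 ≤ i → i ≤ N → 1 ≤ j → j ≤ N →
          (meshRect N lx ly i j ⊆ OmegaS lx ly →
            ∀ p ∈ meshRect N lx ly i j, |u p - uI p| ≤ C * (N : ℝ) ^ (-(2 : ℝ))) ∧
          (∀ p ∈ meshRect N lx ly i j,
            |u p - uI p| ≤ C * (N : ℝ) ^ (-(2 : ℝ)) * Real.log (N : ℝ) ^ 2) := by
  refine ⟨(300 + 100 / β ^ 2) * C0, by positivity, ?_⟩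
  intro N ε lx ly S E1 E2 E12 u uI hSh hS hE1 hE2 hE12 hu hI i j hi1 hiN hj1 hjN
  have hc := hSh.shishkinCell_meshRect hi1 hiN hj1 hjN
  have hsplit := fun p (hp : p ∈ meshRect N lx ly i j) =>
    abs_sub_le_sum_of_eq_bilinInterp hu (hI.eq_bilinInterp hi1 hiN hj1 hjN hc.x_lt hc.y_lt hp)
  have hL : C0 ≤ C0 * log N ^ 2 := le_mul_of_one_le_right hC0.le hSh.one_le_log_sq
  have hβC : 0 ≤ C0 / β ^ 2 := by positivity
  have hβCL : 0 ≤ C0 * log N ^ 2 / β ^ 2 := by positivity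
  have hCL : 0 ≤ C0 * log N ^ 2 := by positivity
  rw [rpow_neg (Nat.cast_nonneg N), rpow_two, ← one_div, mul_one_div]
  refine ⟨fun hΩ p hp => ?_, fun p hp => ?_⟩
  · obtain ⟨hx1, hy0, hy1⟩ := bounds_of_Icc_prod_Icc_subset_omegaS hΩ hc.x_lt.le hc.y_lt.le
    calc |u p - uI p| ≤ 18 * C0 / N ^ 2 + 2 * C0 / N ^ 2 + 4 * C0 / N ^ 2 + 4 * C0 / N ^ 2 :=
          (hsplit p hp).trans <| add_le_add (add_le_add (add_le_add
            (hS.interp_error_le hc hp) (hE1.interp_error_le_of_coarse hC0.le hSh hc hx1 hp))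
            (hE2.interp_error_le_of_coarse hC0.le hSh hc ⟨hy0, hy1⟩ hp))
            (hE12.interp_error_le_of_coarse_x hC0.le hSh hc hx1 hp)
      _ = 28 * C0 / N ^ 2 := by ring
      _ ≤ (300 + 100 / β ^ 2) * C0 / N ^ 2 := by
          gcongr ?_ / _
          linear_combination 272 * hC0.le + 100 * hβC
  · calc |u p - uI p| ≤ 18 * C0 / N ^ 2 + (25 / β ^ 2 + 9) * C0 * log N ^ 2 / N ^ 2
          + 131 * C0 * log N ^ 2 / N ^ 2 + (50 / β ^ 2 + 113) * C0 * log N ^ 2 / N ^ 2 :=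
          (hsplit p hp).trans <| add_le_add (add_le_add (add_le_add
            (hS.interp_error_le hc hp) (hE1.interp_error_le hC0.le hSh hc hp))
            (hE2.interp_error_le hC0.le hSh hc hp)) (hE12.interp_error_le hC0.le hSh hc hp)
      _ ≤ (300 + 100 / β ^ 2) * C0 * log N ^ 2 / N ^ 2 := by
          rw [← add_div, ← add_div, ← add_div]
          gcongr ?_ / _
          linear_combination 18 * hL + 25 * hβCL + 29 * hCL
      _ = _ := by ring

/-- Interpolation error: `‖u − u^I‖_{L^∞(τ)} ≤ C N⁻²` if `τ ⊆ Ω_s`, and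
`‖u − u^I‖_{L^∞(τ)} ≤ C N⁻² ln² N` otherwise, with `C` independent of `ε` and `N`. -/
theorem interpolation_error_Linf (β C0 : ℝ) (hβ : 0 < β) (hC0 : 0 < C0) :
    ∃ C : ℝ, 0 < C ∧
      ∀ (N : ℕ) (ε lx ly : ℝ) (S E1 E2 E12 u uI : ℝ × ℝ → ℝ),
        ShishkinHyp N ε β lx ly →
        BoundS C0 S → BoundE1 ε β C0 E1 → BoundE2 ε C0 E2 → BoundE12 ε β C0 E12 →
        (∀ p : ℝ × ℝ, u p = S p + E1 p + E2 p + E12 p) →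
        IsMeshInterpolant N lx ly u uI →
        ∀ i j : ℕ, 1 ≤ i → i ≤ N → 1 ≤ j → j ≤ N →
          (meshRect N lx ly i j ⊆ OmegaS lx ly →
            ∀ p ∈ meshRect N lx ly i j, |u p - uI p| ≤ C * (N : ℝ) ^ (-(2 : ℝ))) ∧
          (∀ p ∈ meshRect N lx ly i j,
            |u p - uI p| ≤ C * (N : ℝ) ^ (-(2 : ℝ)) * Real.log (N : ℝ) ^ 2) :=
  interpolation_error_Linf_general β C0 hC0
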